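/- Let ε ∈ (0,1) and θ > 0. Let x_1, …, x_p be distinct elements of V forming X = {x_1,…,x_p} with prefixes X^i = {x_1,…,x_i}, and let y_1, …, y_q be distinct elements of V forming Y = {y_1,…,y_q} with prefixes Y^j = {y_1,…,y_j}, where X ∩ Y = ∅; for e = x_i write X^{<e} = X^{i−1} and for e = y_j write Y^{<e} = Y^{j−1}. Let O' ⊆ V. Assume: (i) f(x_i|X^{i−1}) ≥ θ·c(x_i) for every i and f(y_j|Y^{j−1}) ≥ 0 for every j; (ii) every e ∈ O' ∩ Y satisfies f(e|X) ≤ f(e|Y^{<e}); (iii) every e ∈ O' \ (X ∪ Y) satisfies f(e|X) ≤ θ·c(e)/(1−ε); (iv) c(X \ O') ≥ c(O' \ (X ∪ Y)). Then f(O' ∪ X) − f(X) ≤ f(Y) + f(X)/(1−ε). -/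
import Mathlib


/-- The prefix set `X^i = {x_1, …, x_i}` (0-indexed: `{x 0, …, x (i-1)}`). -/
def prefSet {V : Type*} [DecidableEq V] (x : ℕ → V) (i : ℕ) : Finset V :=
  (Finset.range i).image x

lemma prefSet_succ {V : Type*} [DecidableEq V] (x : ℕ → V) (i : ℕ) :
    prefSet x (i + 1) = insert (x i) (prefSet x i) := by
  simp [prefSet, Finset.range_add_one]

lemma prefSet_telescope {V : Type*} [DecidableEq V] (f : Finset V → ℝ)
    (hnorm : f ∅ = 0) (x : ℕ → V) (n : ℕ) :
    f (prefSet x n) =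
      ∑ i ∈ Finset.range n, (f (insert (x i) (prefSet x i)) - f (prefSet x i)) := by
  induction n with
  | zero => simp [prefSet, hnorm]
  | succ n ih =>
      rw [Finset.sum_range_succ, ← ih, prefSet_succ]
      ring

lemma submod_expand {V : Type*} [DecidableEq V] (f : Finset V → ℝ)
    (hsub : ∀ A B : Finset V, A ⊆ B → ∀ e ∉ B,
      f (insert e A) - f A ≥ f (insert e B) - f B)
    (S T : Finset V) :
    f (S ∪ T) - f T ≤ ∑ e ∈ S \ T, (f (insert e T) - f T) := by
  induction S using Finset.induction_on with
  | empty => simp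
  | @insert a S ha ih =>
      by_cases haT : a ∈ T
      · rw [Finset.insert_union, Finset.insert_eq_self.2 (Finset.mem_union_right _ haT),
          Finset.insert_sdiff_of_mem _ haT]
        exact ih
      · have hne : a ∉ S ∪ T := by simp [ha, haT]
        have h1 := hsub T (S ∪ T) Finset.subset_union_right a hne
        have h2 : (insert a S) \ T = insert a (S \ T) := by
          rw [Finset.insert_sdiff_of_notMem _ haT]
        rw [Finset.insert_union, h2,
          Finset.sum_insert (by simp [ha])]
        linarith

/-- With `f` submodular and normalized, positive costs `c`,
`ε ∈ (0,1)`, `θ > 0`, disjoint `X = {x_1,…,x_p}` and `Y = {y_1,…,y_q}` with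
the stated greedy, exchange, threshold and cost conditions for `O' ⊆ V`, we
have `f(O' ∪ X) − f(X) ≤ f(Y) + f(X)/(1−ε)`. -/
theorem smk_statement_7 {V : Type*} [Fintype V] [DecidableEq V]
    (f : Finset V → ℝ) (c : V → ℝ)
    (hsub : ∀ A B : Finset V, A ⊆ B → ∀ e ∉ B,
      f (insert e A) - f A ≥ f (insert e B) - f B)
    (hnorm : f ∅ = 0) (hc : ∀ e : V, 0 < c e)
    (ε θ : ℝ) (hε0 : 0 < ε) (hε1 : ε < 1) (hθ : 0 < θ)
    (p q : ℕ) (x y : ℕ → V)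
    (hinjx : Set.InjOn x (Set.Iio p)) (hinjy : Set.InjOn y (Set.Iio q))
    (X Y : Finset V) (hX : X = prefSet x p) (hY : Y = prefSet y q)
    (hXY : Disjoint X Y)
    (O' : Finset V)
    -- (i) greedy conditions
    (hgx : ∀ i < p,
      f (insert (x i) (prefSet x i)) - f (prefSet x i) ≥ θ * c (x i))
    (hgy : ∀ j < q, 0 ≤ f (insert (y j) (prefSet y j)) - f (prefSet y j))
    -- (ii) exchange condition for elements of O' ∩ Y
    (hex : ∀ j < q, y j ∈ O' →
      f (insert (y j) X) - f X ≤ f (insert (y j) (prefSet y j)) - f (prefSet y j))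
    -- (iii) threshold condition outside X ∪ Y
    (hout : ∀ e ∈ O' \ (X ∪ Y), f (insert e X) - f X ≤ θ * c e / (1 - ε))
    -- (iv) cost condition
    (hcost : ∑ e ∈ O' \ (X ∪ Y), c e ≤ ∑ e ∈ X \ O', c e) :
    f (O' ∪ X) - f X ≤ f Y + f X / (1 - ε) := by
  have hε : (0:ℝ) < 1 - ε := by linarith
  set g : V → ℝ := fun e => f (insert e X) - f X with hg
  -- expansion
  have hexp : f (O' ∪ X) - f X ≤ ∑ e ∈ O' \ X, g e :=
    submod_expand f hsub O' X
  -- split the sum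
  have hsplit : ∑ e ∈ O' \ X, g e
      = ∑ e ∈ (O' \ X) ∩ Y, g e + ∑ e ∈ (O' \ X) \ Y, g e :=
    (Finset.sum_inter_add_sum_sdiff _ _ _).symm
  -- part 1: elements of O' ∩ Y
  have hsetY : (O' \ X) ∩ Y
      = ((Finset.range q).filter (fun j => y j ∈ O')).image y := by
    ext e
    simp only [Finset.mem_inter, Finset.mem_sdiff, Finset.mem_image,
      Finset.mem_filter, Finset.mem_range]
    constructor
    · rintro ⟨⟨heO, -⟩, heY⟩
      rw [hY] at heY
      obtain ⟨j, hj, rfl⟩ := Finset.mem_image.1 heY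
      simp only [Finset.mem_range] at hj
      exact ⟨j, ⟨hj, heO⟩, rfl⟩
    · rintro ⟨j, ⟨hj, hO⟩, rfl⟩
      have hYmem : y j ∈ Y := by
        rw [hY]; exact Finset.mem_image.2 ⟨j, Finset.mem_range.2 hj, rfl⟩
      exact ⟨⟨hO, fun hX' => (Finset.disjoint_left.1 hXY hX') hYmem⟩, hYmem⟩
  have hinjy' : ∀ a ∈ (Finset.range q).filter (fun j => y j ∈ O'),
      ∀ b ∈ (Finset.range q).filter (fun j => y j ∈ O'), y a = y b → a = b := by
    intro a ha b hb hab
    simp only [Finset.mem_filter, Finset.mem_range] at ha hb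
    exact hinjy ha.1 hb.1 hab
  have hpart1 : ∑ e ∈ (O' \ X) ∩ Y, g e ≤ f Y := by
    rw [hsetY, Finset.sum_image hinjy']
    have h1 : ∑ j ∈ (Finset.range q).filter (fun j => y j ∈ O'), g (y j)
        ≤ ∑ j ∈ (Finset.range q).filter (fun j => y j ∈ O'),
            (f (insert (y j) (prefSet y j)) - f (prefSet y j)) := by
      apply Finset.sum_le_sum
      intro j hj
      simp only [Finset.mem_filter, Finset.mem_range] at hj
      exact hex j hj.1 hj.2
    have h2 : ∑ j ∈ (Finset.range q).filter (fun j => y j ∈ O'),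
          (f (insert (y j) (prefSet y j)) - f (prefSet y j))
        ≤ ∑ j ∈ Finset.range q,
            (f (insert (y j) (prefSet y j)) - f (prefSet y j)) := by
      apply Finset.sum_le_sum_of_subset_of_nonneg (Finset.filter_subset _ _)
      intro j hj _
      exact hgy j (Finset.mem_range.1 hj)
    calc _ ≤ _ := h1
      _ ≤ _ := h2
      _ = f Y := by rw [hY, prefSet_telescope f hnorm y q]
  -- part 2: elements outside X ∪ Y
  have hsetO : (O' \ X) \ Y = O' \ (X ∪ Y) := by
    ext e; simp [Finset.mem_sdiff]; tauto
  have hθcX : θ * ∑ e ∈ X, c e ≤ f X := by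
    have hinjx' : ∀ a ∈ Finset.range p, ∀ b ∈ Finset.range p, x a = x b → a = b := by
      intro a ha b hb hab
      exact hinjx (Finset.mem_range.1 ha) (Finset.mem_range.1 hb) hab
    rw [hX, prefSet_telescope f hnorm x p, prefSet, Finset.sum_image hinjx',
      Finset.mul_sum]
    exact Finset.sum_le_sum fun i hi => hgx i (Finset.mem_range.1 hi)
  have hpart2 : ∑ e ∈ (O' \ X) \ Y, g e ≤ f X / (1 - ε) := by
    rw [hsetO]
    have h1 : ∑ e ∈ O' \ (X ∪ Y), g e ≤ ∑ e ∈ O' \ (X ∪ Y), θ * c e / (1 - ε) :=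
      Finset.sum_le_sum fun e he => hout e he
    have h2 : ∑ e ∈ O' \ (X ∪ Y), θ * c e / (1 - ε)
        = θ / (1 - ε) * ∑ e ∈ O' \ (X ∪ Y), c e := by
      rw [Finset.mul_sum]; apply Finset.sum_congr rfl; intro e _; ring
    have h3 : ∑ e ∈ X \ O', c e ≤ ∑ e ∈ X, c e := by
      apply Finset.sum_le_sum_of_subset_of_nonneg (Finset.sdiff_subset)
      intro e _ _; exact (hc e).le
    have h4 : θ / (1 - ε) * ∑ e ∈ O' \ (X ∪ Y), c e
        ≤ θ / (1 - ε) * ∑ e ∈ X, c e := by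
      apply mul_le_mul_of_nonneg_left (le_trans hcost h3)
      positivity
    have h5 : θ / (1 - ε) * ∑ e ∈ X, c e ≤ f X / (1 - ε) := by
      rw [div_mul_eq_mul_div, div_le_div_iff_of_pos_right hε]
      exact hθcX
    linarith
  linarith
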